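/- For any vector Y = (Y1, Y2, Y3) ∈ R^9 with Y1, Y2, Y3 ∈ R^3, unit vectors a, b ∈ R^3, and α > 0, one has |−αY1 + a×Y3|² + |−αY2 + b×Y3|² + |a×Y1 + b×Y2|² ≤ max(2+2α², 3+α²)(|Y1|²+|Y2|²+|Y3|²). -/

import Mathlib

noncomputable section

/-- The skew-symmetric cross-product matrix of `x ∈ ℝ³`. -/
def crossMat (x : EuclideanSpace ℝ (Fin 3)) : Matrix (Fin 3) (Fin 3) ℝ :=
  !![0, -x 2, x 1; x 2, 0, -x 0; -x 1, x 0, 0]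

/-- The cross product on `ℝ³` (Euclidean space). -/
def cross (x y : EuclideanSpace ℝ (Fin 3)) : EuclideanSpace ℝ (Fin 3) :=
  WithLp.toLp 2 ![x 1 * y 2 - x 2 * y 1, x 2 * y 0 - x 0 * y 2, x 0 * y 1 - x 1 * y 0]

/-!
For a unit vector `a`, Lagrange's identity gives `‖a × v‖ ≤ ‖v‖`, so by the triangle inequality,
with `x, y, z` the norms of `Y1, Y2, Y3`, it suffices to bound
`(|α| x + z)² + (|α| y + z)² + (x + y)²`. Expanding, the cross terms are absorbed by AM-GM:
`2|α| x z ≤ x² + α² z²` when `α² ≤ 1` and `2|α| x z ≤ α² x² + z²` when `α² ≥ 1`.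
-/

open scoped InnerProductSpace

lemma cross_eq_toLp_crossProduct (x y : EuclideanSpace ℝ (Fin 3)) :
    cross x y = WithLp.toLp 2 (crossProduct (WithLp.ofLp x) (WithLp.ofLp y)) := by
  rw [cross, cross_apply]

lemma norm_cross_sq (x y : EuclideanSpace ℝ (Fin 3)) :
    ‖cross x y‖ ^ 2 = ‖x‖ ^ 2 * ‖y‖ ^ 2 - ⟪x, y⟫_ℝ ^ 2 := by
  simp only [← real_inner_self_eq_norm_sq, EuclideanSpace.inner_eq_star_dotProduct,
    cross_eq_toLp_crossProduct, star_trivial, cross_dot_cross, dotProduct_comm (WithLp.ofLp y)]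
  ring

lemma norm_cross_le (x y : EuclideanSpace ℝ (Fin 3)) : ‖cross x y‖ ≤ ‖x‖ * ‖y‖ := by
  rw [← pow_le_pow_iff_left₀ (norm_nonneg _) (by positivity) two_ne_zero, norm_cross_sq, mul_pow]
  linarith [sq_nonneg ⟪x, y⟫_ℝ]

lemma norm_cross_le_of_norm_eq_one {a : EuclideanSpace ℝ (Fin 3)} (ha : ‖a‖ = 1)
    (v : EuclideanSpace ℝ (Fin 3)) : ‖cross a v‖ ≤ ‖v‖ :=
  (norm_cross_le a v).trans_eq (by rw [ha, one_mul])

lemma sq_add_sq_add_sq_le_max (t x y z : ℝ) :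
    (t * x + z) ^ 2 + (t * y + z) ^ 2 + (x + y) ^ 2 ≤
      max (2 + 2 * t ^ 2) (3 + t ^ 2) * (x ^ 2 + y ^ 2 + z ^ 2) := by
  have hxy := two_mul_le_add_sq x y
  rcases le_total (t ^ 2) 1 with ht | ht
  · rw [max_eq_right (by linarith)]
    nlinarith [two_mul_le_add_sq x (t * z), two_mul_le_add_sq y (t * z), sq_nonneg z]
  · rw [max_eq_left (by linarith)]
    nlinarith [two_mul_le_add_sq (t * x) z, two_mul_le_add_sq (t * y) z, sq_nonneg z]

lemma norm_neg_smul_add_le (α : ℝ) (v w : EuclideanSpace ℝ (Fin 3)) :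
    ‖-(α • v) + w‖ ≤ |α| * ‖v‖ + ‖w‖ := by
  simpa only [norm_neg, norm_smul, Real.norm_eq_abs] using norm_add_le (-(α • v)) w

theorem stmt_4_general (Y1 Y2 Y3 : EuclideanSpace ℝ (Fin 3)) (a b : EuclideanSpace ℝ (Fin 3))
    (ha : ‖a‖ = 1) (hb : ‖b‖ = 1) (α : ℝ) :
    ‖-(α • Y1) + cross a Y3‖ ^ 2 + ‖-(α • Y2) + cross b Y3‖ ^ 2 +
      ‖cross a Y1 + cross b Y2‖ ^ 2 ≤
    max (2 + 2 * α ^ 2) (3 + α ^ 2) * (‖Y1‖ ^ 2 + ‖Y2‖ ^ 2 + ‖Y3‖ ^ 2) := by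
  have h1 : ‖-(α • Y1) + cross a Y3‖ ≤ |α| * ‖Y1‖ + ‖Y3‖ :=
    (norm_neg_smul_add_le α Y1 _).trans (by gcongr; exact norm_cross_le_of_norm_eq_one ha Y3)
  have h2 : ‖-(α • Y2) + cross b Y3‖ ≤ |α| * ‖Y2‖ + ‖Y3‖ :=
    (norm_neg_smul_add_le α Y2 _).trans (by gcongr; exact norm_cross_le_of_norm_eq_one hb Y3)
  have h3 : ‖cross a Y1 + cross b Y2‖ ≤ ‖Y1‖ + ‖Y2‖ :=
    (norm_add_le _ _).trans
      (add_le_add (norm_cross_le_of_norm_eq_one ha Y1) (norm_cross_le_of_norm_eq_one hb Y2))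
  calc _ ≤ (|α| * ‖Y1‖ + ‖Y3‖) ^ 2 + (|α| * ‖Y2‖ + ‖Y3‖) ^ 2 + (‖Y1‖ + ‖Y2‖) ^ 2 := by
        gcongr
    _ ≤ _ := by simpa only [sq_abs] using sq_add_sq_add_sq_le_max |α| ‖Y1‖ ‖Y2‖ ‖Y3‖

theorem stmt_4 (Y1 Y2 Y3 : EuclideanSpace ℝ (Fin 3)) (a b : EuclideanSpace ℝ (Fin 3))
    (ha : ‖a‖ = 1) (hb : ‖b‖ = 1) (α : ℝ) (hα : 0 < α) :
    ‖-(α • Y1) + cross a Y3‖ ^ 2 + ‖-(α • Y2) + cross b Y3‖ ^ 2 +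
      ‖cross a Y1 + cross b Y2‖ ^ 2 ≤
    max (2 + 2 * α ^ 2) (3 + α ^ 2) * (‖Y1‖ ^ 2 + ‖Y2‖ ^ 2 + ‖Y3‖ ^ 2) :=
  stmt_4_general Y1 Y2 Y3 a b ha hb α
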